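/- The optimal cost function satisfies the optimality equation J* = T(J*), i.e., for every state x, J*(x) = inf_{u ∈ U(x)} { g(x,u) + Σ_{x' ∈ S} J*(x') q(x'|x,u) }. -/

import Mathlib

/-!
Common framework: countable-state/countable-control total-cost MDPs under the
General Convergence (GC) condition, following H. Yu, "On Convergence of Value
Iteration for a Class of Total Cost Markov Decision Processes".

States `S` and controls `C` are countable types; `U x` is the nonempty set of
feasible controls at `x`; `g x u ∈ (-∞, +∞]` is the one-stage cost (an `EReal`
that is never `⊥` on feasible pairs); `q x u x'` are transition probabilities.

A policy is represented by its conditional control distributions given the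
(reversed) history of past (state, control) pairs and the current state.
Expectations are computed by explicit countable sums, splitting every
extended-real quantity into its positive and negative parts (computed in
`ℝ≥0∞`) and recombining with the convention `∞ - ∞ = ∞`.
-/

open scoped ENNReal Classical
open Filter

noncomputable section

namespace GCMDP

/-- The positive part of an extended real, as an element of `ℝ≥0∞`. -/
def ePos (a : EReal) : ℝ≥0∞ := if a = ⊤ then ⊤ else ENNReal.ofReal a.toReal

/-- Recombine a positive part `P` and a negative part `N` into an extended real,
with the convention `∞ - ∞ = ∞`. -/
def signedSum (P N : ℝ≥0∞) : EReal := if P = ⊤ then ⊤ else (P : EReal) - (N : EReal)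

variable {S C : Type}

/-- A (randomized, history-dependent) policy: to each reversed list of past
(state, control) pairs and each current state it assigns a mass function on
controls. -/
def Policy (S C : Type) : Type := List (S × C) → S → C → ℝ≥0∞

/-- A policy is valid for the control constraint `U` if each of its conditional
distributions is a probability distribution concentrated on the feasible set. -/
def IsPolicy (U : S → Set C) (π : Policy S C) : Prop :=
  ∀ (h : List (S × C)) (x : S), (∑' u : C, π h x u) = 1 ∧ ∀ u : C, π h x u ≠ 0 → u ∈ U x

/-- A policy is nonrandomized if each of its conditional distributions is a
point mass. -/
def Nonrandomized (π : Policy S C) : Prop :=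
  ∀ (h : List (S × C)) (x : S), ∃ u : C, ∀ u' : C, π h x u' = if u' = u then 1 else 0

/-- The initial state recorded in a reversed history `h` with current state `x`. -/
def initOf (h : List (S × C)) (x : S) : S := ((h.getLast?).map Prod.fst).getD x

/-- A policy is semi-Markov if its decision at time `k` depends on the history
only through the time `k`, the initial state and the current state. -/
def IsSemiMarkov (π : Policy S C) : Prop :=
  ∀ (h h' : List (S × C)) (x : S), h.length = h'.length → initOf h x = initOf h' x →
    π h x = π h' x

/-- A policy is Markov if its decision at time `k` depends on the history only
through the time `k` and the current state. -/
def IsMarkov (π : Policy S C) : Prop :=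
  ∀ (h h' : List (S × C)) (x : S), h.length = h'.length → π h x = π h' x

/-- A policy is stationary if its decision depends only on the current state. -/
def IsStationary (π : Policy S C) : Prop :=
  ∀ (h h' : List (S × C)) (x : S), π h x = π h' x

/-- The stationary policy determined by a one-step decision rule `μ`. -/
def toPolicy (μ : S → C → ℝ≥0∞) : Policy S C := fun _ x u => μ x u

/-- Probability that, starting from `x₀` and following policy `π`, the first
transitions produce the reversed history `h` and current state `y`. -/
def histProb (q : S → C → S → ℝ≥0∞) (π : Policy S C) (x₀ : S) :
    List (S × C) → S → ℝ≥0∞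
  | [], y => if y = x₀ then 1 else 0
  | (z, u) :: h, y => histProb q π x₀ h z * π h z u * q z u y

/-- Marginal distribution of the state `x_n` at time `n` under policy `π`
started at `x₀`. -/
def sDist (q : S → C → S → ℝ≥0∞) (π : Policy S C) (x₀ : S) (n : ℕ) (y : S) : ℝ≥0∞ :=
  ∑' h : {l : List (S × C) // l.length = n}, histProb q π x₀ h.1 y

/-- Joint distribution of the state-control pair `(x_n, u_n)` at time `n`. -/
def saDist (q : S → C → S → ℝ≥0∞) (π : Policy S C) (x₀ : S) (n : ℕ) (y : S) (u : C) : ℝ≥0∞ :=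
  ∑' h : {l : List (S × C) // l.length = n}, histProb q π x₀ h.1 y * π h.1 y u

/-- Expectation `E^π_{x₀}[f(x_n, u_n)]` of a nonnegative cost. -/
def costAt (q : S → C → S → ℝ≥0∞) (π : Policy S C) (x₀ : S) (n : ℕ)
    (f : S → C → ℝ≥0∞) : ℝ≥0∞ :=
  ∑' y : S, ∑' u : C, saDist q π x₀ n y u * f y u

/-- Positive part `g₊` of the one-stage cost. -/
def gPos (g : S → C → EReal) (x : S) (u : C) : ℝ≥0∞ := ePos (g x u)

/-- Negative part `g₋` of the one-stage cost. -/
def gNeg (g : S → C → EReal) (x : S) (u : C) : ℝ≥0∞ := ePos (-(g x u))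

/-- `J_π^+(x) = E^π_x[∑_k g₊(x_k,u_k)]`. -/
def Jplus (q : S → C → S → ℝ≥0∞) (g : S → C → EReal) (π : Policy S C) (x : S) : ℝ≥0∞ :=
  ∑' n : ℕ, costAt q π x n (gPos g)

/-- `J_π^-(x) = E^π_x[∑_k g₋(x_k,u_k)]`. -/
def Jminus (q : S → C → S → ℝ≥0∞) (g : S → C → EReal) (π : Policy S C) (x : S) : ℝ≥0∞ :=
  ∑' n : ℕ, costAt q π x n (gNeg g)

/-- The total cost `J_π(x) = J_π^+(x) - J_π^-(x)` of a policy. -/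
def Jpol (q : S → C → S → ℝ≥0∞) (g : S → C → EReal) (π : Policy S C) (x : S) : EReal :=
  signedSum (Jplus q g π x) (Jminus q g π x)

/-- The general convergence (GC) condition: `sup_π J_π^-(x) < ∞` for all `x`. -/
def GC (U : S → Set C) (q : S → C → S → ℝ≥0∞) (g : S → C → EReal) : Prop :=
  ∀ x : S, (⨆ π ∈ {π' : Policy S C | IsPolicy U π'}, Jminus q g π x) ≠ ⊤

/-- The optimal cost function `J*(x) = inf_π J_π(x)`. -/
def Jstar (U : S → Set C) (q : S → C → S → ℝ≥0∞) (g : S → C → EReal) (x : S) : EReal :=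
  ⨅ π ∈ {π' : Policy S C | IsPolicy U π'}, Jpol q g π x

/-- `J^{*+}(x) = inf_π J_π^+(x)`. -/
def JstarPlus (U : S → Set C) (q : S → C → S → ℝ≥0∞) (g : S → C → EReal) (x : S) : ℝ≥0∞ :=
  ⨅ π ∈ {π' : Policy S C | IsPolicy U π'}, Jplus q g π x

/-- `J^{*-}(x) = inf_π J_π^-(x)`. -/
def JstarMinus (U : S → Set C) (q : S → C → S → ℝ≥0∞) (g : S → C → EReal) (x : S) : ℝ≥0∞ :=
  ⨅ π ∈ {π' : Policy S C | IsPolicy U π'}, Jminus q g π x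

/-- The general one-stage dynamic programming operator with one-stage cost `c`:
`(opT c J)(x) = inf_{u ∈ U(x)} { c(x,u) + ∑_{x'} J(x') q(x'|x,u) }`, where the
bracket is evaluated by separating positive and negative parts, with the
convention `∞ - ∞ = ∞`. -/
def opT (U : S → Set C) (q : S → C → S → ℝ≥0∞) (c : S → C → EReal)
    (J : S → EReal) (x : S) : EReal :=
  ⨅ u ∈ U x,
    signedSum (ePos (c x u) + ∑' x' : S, q x u x' * ePos (J x'))
      (ePos (-(c x u)) + ∑' x' : S, q x u x' * ePos (-(J x')))

/-- The dynamic programming operator `T` of the total cost problem. -/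
def Top (U : S → Set C) (q : S → C → S → ℝ≥0∞) (g : S → C → EReal) :
    (S → EReal) → S → EReal :=
  opT U q g

/-- The operator `T₊` associated with the positive part `g₊` of the cost. -/
def TopPlus (U : S → Set C) (q : S → C → S → ℝ≥0∞) (g : S → C → EReal) :
    (S → EReal) → S → EReal :=
  opT U q (fun x u => max (g x u) 0)

/-- The operator `T₋` associated with the (negated) negative part `-g₋` of the cost. -/
def TopMinus (U : S → Set C) (q : S → C → S → ℝ≥0∞) (g : S → C → EReal) :
    (S → EReal) → S → EReal :=
  opT U q (fun x u => min (g x u) 0)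

/-- The cost-free operator `T₀`. -/
def TopZero (U : S → Set C) (q : S → C → S → ℝ≥0∞) :
    (S → EReal) → S → EReal :=
  opT U q (fun _ _ => 0)

/-- The monotone-increasing modification `T̃(J) = max{J, T(J)}` of `T`. -/
def Ttil (U : S → Set C) (q : S → C → S → ℝ≥0∞) (g : S → C → EReal)
    (J : S → EReal) (x : S) : EReal :=
  max (J x) (Top U q g J x)

/-- The operator `T_μ` associated with a stationary decision rule `μ`. -/
def Tmu (q : S → C → S → ℝ≥0∞) (g : S → C → EReal) (μ : S → C → ℝ≥0∞)
    (J : S → EReal) (x : S) : EReal :=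
  signedSum (∑' u : C, μ x u * (ePos (g x u) + ∑' x' : S, q x u x' * ePos (J x')))
    (∑' u : C, μ x u * (ePos (-(g x u)) + ∑' x' : S, q x u x' * ePos (-(J x'))))

/-- Expectation `E^π_{x₀}[J(x_n)]` of an extended-real function of the state at
time `n` (positive and negative parts combined with the convention `∞-∞=∞`). -/
def expState (q : S → C → S → ℝ≥0∞) (π : Policy S C) (x₀ : S) (n : ℕ)
    (J : S → EReal) : EReal :=
  signedSum (∑' y : S, sDist q π x₀ n y * ePos (J y))
    (∑' y : S, sDist q π x₀ n y * ePos (-(J y)))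

/-- The expected tail cost `E^π_{x₀}[∑_{k ≥ n} g(x_k, u_k)]`. -/
def tailCost (q : S → C → S → ℝ≥0∞) (g : S → C → EReal) (π : Policy S C)
    (x₀ : S) (n : ℕ) : EReal :=
  signedSum (∑' k : ℕ, costAt q π x₀ (n + k) (gPos g))
    (∑' k : ℕ, costAt q π x₀ (n + k) (gNeg g))

/-- Membership in the class `A₀(S)`: functions nowhere `-∞` such that
`inf_{n ≥ 1} T₀ⁿ(min{J, 0})` is nowhere `-∞`. -/
def MemA0 (U : S → Set C) (q : S → C → S → ℝ≥0∞) (J : S → EReal) : Prop :=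
  (∀ x : S, J x ≠ ⊥) ∧
    ∀ x : S, (⨅ n : ℕ, (TopZero U q)^[n + 1] (fun y => min (J y) 0) x) ≠ ⊥

/-!
`T J* ≤ J*`: the cost of a policy `π` from `x` is the `π`-average, over its first control `u`, of
`g(x,u)` plus the expected cost from the next state of `π` shifted by one step. That shifted cost
dominates `J*`, and some `u` of positive first-step probability does at least as well as the
average.

`J* ≤ T J*`: for `u ∈ U(x)`, play `u` first and then, from the state reached, a policy that is
`ε`-optimal there.

Under GC, `sup_π J_π⁻` bounds the expected negative part of `J*` after one transition, so every
negative part that occurs is finite and the convention `∞ - ∞ = ∞` never interferes.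
-/

lemma ENNReal.tsum_iSup_le_iSup_tsum {α ι : Type*} (f : α → ι → ℝ≥0∞) :
    ∑' a, ⨆ i, f a i ≤ ⨆ s : α → ι, ∑' a, f a (s a) := by
  rw [ENNReal.tsum_eq_iSup_sum]
  refine iSup_le fun F => ?_
  have hdir : ∀ s t : α → ι, ∃ k : α → ι, ∀ a, f a (s a) ≤ f a (k a) ∧ f a (t a) ≤ f a (k a) :=
    fun s t => ⟨fun a => if f a (s a) ≤ f a (t a) then t a else s a, fun a => by
      dsimp only
      split_ifs with h
      · exact ⟨h, le_rfl⟩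
      · exact ⟨le_rfl, (not_le.mp h).le⟩⟩
  calc ∑ a ∈ F, ⨆ i, f a i ≤ ∑ a ∈ F, ⨆ s : α → ι, f a (s a) :=
        Finset.sum_le_sum fun a _ => iSup_le fun i => le_iSup_of_le (fun _ => i) le_rfl
    _ = ⨆ s : α → ι, ∑ a ∈ F, f a (s a) := ENNReal.finsetSum_iSup hdir
    _ ≤ ⨆ s : α → ι, ∑' a, f a (s a) := iSup_mono fun s => ENNReal.sum_le_tsum F

/-- A `w`-average of the values `A i - B i` is not below all of them. -/
lemma exists_ne_zero_add_le_add_of_tsum {ι : Type*} {w A B : ι → ℝ≥0∞} {P N : ℝ≥0∞}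
    (hw : ∑' i, w i = 1) (hP : ∑' i, w i * A i = P) (hN : ∑' i, w i * B i = N)
    (hPN : P + N ≠ ⊤) : ∃ i, w i ≠ 0 ∧ A i + N ≤ P + B i := by
  by_contra! hcon
  obtain ⟨i, hi⟩ : ∃ i, w i ≠ 0 := by
    by_contra! h
    simp [h] at hw
  have hwi : w i ≠ ⊤ := ne_top_of_le_ne_top ENNReal.one_ne_top (hw ▸ ENNReal.le_tsum i)
  have hsum : ∀ C : ι → ℝ≥0∞, ∀ c, ∑' j, w j * (C j + c) = ∑' j, w j * C j + c := fun C c => by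
    simp only [mul_add, ENNReal.tsum_add, ENNReal.tsum_mul_right, hw, one_mul]
  have hlt : ∑' j, w j * (B j + P) < ∑' j, w j * (A j + N) := by
    refine ENNReal.tsum_lt_tsum (i := i) (by rwa [hsum, hN, add_comm]) (fun j => ?_)
      (ENNReal.mul_lt_mul_right hi hwi (add_comm P (B i) ▸ hcon i hi))
    rcases eq_or_ne (w j) 0 with h | h
    · simp [h]
    · exact mul_le_mul_right (add_comm P (B j) ▸ (hcon j h).le) _
  rw [hsum, hsum, hN, hP, add_comm] at hlt
  exact lt_irrefl _ hlt

lemma EReal.le_of_forall_le_add_ennreal {a b : EReal}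
    (h : ∀ ε : ℝ≥0∞, 0 < ε → ε ≠ ⊤ → a ≤ b + ε) : a ≤ b := by
  refine EReal.le_of_forall_lt_iff_le.mp fun z hz => ?_
  induction b using EReal.rec with
  | bot => simp [(by simpa using h 1 one_pos ENNReal.one_ne_top : a = ⊥)]
  | top => exact absurd hz (not_lt_of_ge le_top)
  | coe b =>
    have hbz : b < z := EReal.coe_lt_coe_iff.mp hz
    have := h (ENNReal.ofReal (z - b)) (by simpa using hbz) ENNReal.ofReal_ne_top
    rwa [EReal.coe_ennreal_ofReal, max_eq_left (by linarith), ← EReal.coe_add,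
      add_sub_cancel] at this

lemma EReal.lt_add_ennreal {a : EReal} (ha : a ≠ ⊤) (ha' : a ≠ ⊥) {ε : ℝ≥0∞}
    (hε : 0 < ε) (hε' : ε ≠ ⊤) : a < a + ε := by
  lift a to ℝ using ⟨ha, ha'⟩
  rw [← EReal.coe_ennreal_toReal hε', ← EReal.coe_add, EReal.coe_lt_coe_iff]
  linarith [ENNReal.toReal_pos hε.ne' hε']

lemma ePos_coe_ennreal (P : ℝ≥0∞) : ePos (P : EReal) = P := by
  rcases eq_or_ne P ⊤ with rfl | hP
  · simp [ePos]
  · rw [ePos, if_neg (by simpa using hP), EReal.toReal_coe_ennreal, ENNReal.ofReal_toReal hP]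

lemma ePos_mono {a b : EReal} (h : a ≤ b) : ePos a ≤ ePos b := by
  unfold ePos
  split_ifs with ha hb hb
  · exact le_rfl
  · exact absurd (top_le_iff.mp (ha ▸ h)) hb
  · exact le_top
  · rcases eq_or_ne a ⊥ with rfl | ha'
    · simp
    exact ENNReal.ofReal_le_ofReal (EReal.toReal_le_toReal h ha' hb)

lemma ePos_neg_ne_top {a : EReal} (ha : a ≠ ⊥) : ePos (-a) ≠ ⊤ := by
  rw [ePos, if_neg (by simpa using ha)]
  exact ENNReal.ofReal_ne_top

lemma signedSum_top_left (N : ℝ≥0∞) : signedSum ⊤ N = ⊤ := if_pos rfl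

lemma signedSum_eq_coe_sub {P N : ℝ≥0∞} (hP : P ≠ ⊤) (hN : N ≠ ⊤) :
    signedSum P N = ((P.toReal - N.toReal : ℝ) : EReal) := by
  rw [signedSum, if_neg hP, ← EReal.coe_ennreal_toReal hP, ← EReal.coe_ennreal_toReal hN,
    EReal.coe_sub]

lemma signedSum_le_signedSum_iff {P₁ N₁ P₂ N₂ : ℝ≥0∞} (hN₁ : N₁ ≠ ⊤) (hN₂ : N₂ ≠ ⊤) :
    signedSum P₁ N₁ ≤ signedSum P₂ N₂ ↔ P₁ + N₂ ≤ P₂ + N₁ := by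
  rcases eq_or_ne P₂ ⊤ with rfl | hP₂
  · simp [signedSum_top_left]
  rcases eq_or_ne P₁ ⊤ with rfl | hP₁
  · simp [signedSum_top_left, signedSum_eq_coe_sub hP₂ hN₂, hP₂, hN₁, -EReal.coe_sub]
  rw [signedSum_eq_coe_sub hP₁ hN₁, signedSum_eq_coe_sub hP₂ hN₂, EReal.coe_le_coe_iff,
    ← ENNReal.toReal_le_toReal (by finiteness) (by finiteness), ENNReal.toReal_add hP₁ hN₂,
    ENNReal.toReal_add hP₂ hN₁]
  constructor <;> intro h <;> linarith

lemma signedSum_ePos {a : EReal} (ha : a ≠ ⊥) : signedSum (ePos a) (ePos (-a)) = a := by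
  induction a using EReal.rec with
  | bot => exact absurd rfl ha
  | top => simp [signedSum, ePos]
  | coe a =>
    rw [signedSum_eq_coe_sub (by simp [ePos]) (by simp [ePos])]
    rcases le_total a 0 with h | h
    · simp [ePos, h, ENNReal.toReal_ofReal, ENNReal.ofReal_eq_zero.mpr h]
    · simp [ePos, h, ENNReal.toReal_ofReal, ENNReal.ofReal_eq_zero.mpr (neg_nonpos.mpr h)]

lemma signedSum_add_right {P N ε : ℝ≥0∞} (hN : N ≠ ⊤) (hε : ε ≠ ⊤) :
    signedSum (P + ε) N = signedSum P N + ε := by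
  rcases eq_or_ne P ⊤ with rfl | hP
  · rw [top_add, signedSum_top_left, ← EReal.coe_ennreal_toReal hε, EReal.top_add_coe]
  · rw [signedSum_eq_coe_sub (by finiteness) hN, signedSum_eq_coe_sub hP hN,
      ENNReal.toReal_add hP hε, ← EReal.coe_ennreal_toReal hε, ← EReal.coe_add]
    congr 1
    ring

lemma neg_le_signedSum (P N : ℝ≥0∞) : -(N : EReal) ≤ signedSum P N := by
  unfold signedSum
  split_ifs
  · exact le_top
  · rw [sub_eq_add_neg]
    exact le_add_of_nonneg_left (EReal.coe_ennreal_nonneg P)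

def shiftPol (π : Policy S C) (x : S) (u : C) : Policy S C := fun h y => π (h ++ [(x, u)]) y

lemma initOf_cons (w : S) (v : C) (l : List (S × C)) (y : S) :
    initOf ((w, v) :: l) y = initOf l w := by
  cases l <;> simp [initOf, List.getLast?_cons]

lemma histProb_eq_zero_of_initOf_ne {q : S → C → S → ℝ≥0∞} {π : Policy S C} {x₀ : S}
    {l : List (S × C)} {y : S} (h : initOf l y ≠ x₀) : histProb q π x₀ l y = 0 := by
  induction l generalizing y with
  | nil => simpa [histProb, initOf] using h
  | cons p l ih =>
    obtain ⟨w, v⟩ := p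
    rw [initOf_cons] at h
    simp [histProb, ih h]

lemma histProb_append (q : S → C → S → ℝ≥0∞) (π : Policy S C) (x₀ : S)
    (l : List (S × C)) (w : S) (v : C) (y : S) :
    histProb q π x₀ (l ++ [(w, v)]) y = (if w = x₀ then π [] w v else 0) *
      (q w v (initOf l y) * histProb q (shiftPol π w v) (initOf l y) l y) := by
  induction l generalizing y with
  | nil => split_ifs <;> simp [histProb, initOf, *]
  | cons p l ih =>
    obtain ⟨z, u⟩ := p
    simp only [List.cons_append, histProb, ih, initOf_cons, shiftPol]
    ring

lemma mul_histProb_initOf (q : S → C → S → ℝ≥0∞) (π : Policy S C) (w : S) (v : C)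
    (l : List (S × C)) (y : S) :
    q w v (initOf l y) * histProb q π (initOf l y) l y = ∑' z : S, q w v z * histProb q π z l y :=
  (tsum_eq_single (f := fun z => q w v z * histProb q π z l y) _ fun z hz => by
    rw [histProb_eq_zero_of_initOf_ne (Ne.symm hz), mul_zero]).symm

/-- Histories are stored most recent first, so appending adds the first transition. -/
def appendEquiv (n : ℕ) : ({l : List (S × C) // l.length = n} × (S × C))
    ≃ {l : List (S × C) // l.length = n + 1} where
  toFun p := ⟨p.1.1 ++ [p.2], by simp [p.1.2]⟩
  invFun l := (⟨l.1.dropLast, by simp [l.2]⟩,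
    l.1.getLast (List.ne_nil_of_length_pos (by simp [l.2])))
  left_inv p := Prod.ext (Subtype.ext List.dropLast_concat) List.getLast_concat
  right_inv l := Subtype.ext (List.dropLast_append_getLast _)

lemma tsum_histProb_succ (q : S → C → S → ℝ≥0∞) (π : Policy S C) (x y : S) (n : ℕ)
    (F : List (S × C) → ℝ≥0∞) :
    ∑' l : {l : List (S × C) // l.length = n + 1}, histProb q π x l.1 y * F l.1
      = ∑' v : C, π [] x v * ∑' z : S, q x v z * ∑' l : {l : List (S × C) // l.length = n},
          histProb q (shiftPol π x v) z l.1 y * F (l.1 ++ [(x, v)]) := by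
  rw [← (appendEquiv n).tsum_eq, ENNReal.tsum_prod', ENNReal.tsum_comm, ENNReal.tsum_prod',
    tsum_eq_single x fun w hw => by simp [appendEquiv, histProb_append, hw]]
  refine tsum_congr fun v => ?_
  simp only [appendEquiv, Equiv.coe_fn_mk, histProb_append, if_pos, mul_histProb_initOf]
  simp only [← ENNReal.tsum_mul_left, ← ENNReal.tsum_mul_right, mul_assoc]
  exact ENNReal.tsum_comm

lemma saDist_succ (q : S → C → S → ℝ≥0∞) (π : Policy S C) (x : S) (n : ℕ) (y : S) (u : C) :
    saDist q π x (n + 1) y u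
      = ∑' v : C, π [] x v * ∑' z : S, q x v z * saDist q (shiftPol π x v) z n y u :=
  tsum_histProb_succ q π x y n fun l => π l y u

lemma costAt_zero (q : S → C → S → ℝ≥0∞) (π : Policy S C) (x : S) (f : S → C → ℝ≥0∞) :
    costAt q π x 0 f = ∑' u : C, π [] x u * f x u := by
  have hsa : ∀ y u, saDist q π x 0 y u = if y = x then π [] x u else 0 := fun y u => by
    rw [saDist, tsum_eq_single (⟨[], rfl⟩ : {l : List (S × C) // l.length = 0})
      fun l hl => (hl (Subtype.ext (List.length_eq_zero_iff.mp l.2))).elim]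
    split_ifs <;> simp [histProb, *]
  rw [costAt, tsum_eq_single x fun y hy => by simp [hsa, hy]]
  simp [hsa]

lemma costAt_succ (q : S → C → S → ℝ≥0∞) (π : Policy S C) (x : S) (n : ℕ) (f : S → C → ℝ≥0∞) :
    costAt q π x (n + 1) f
      = ∑' v : C, π [] x v * ∑' z : S, q x v z * costAt q (shiftPol π x v) z n f := by
  simp only [costAt, saDist_succ, ← ENNReal.tsum_mul_left, ← ENNReal.tsum_mul_right, mul_assoc]
  calc _ = ∑' (y : S) (v : C) (u : C) (z : S), _ := tsum_congr fun y => ENNReal.tsum_comm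
    _ = _ := ENNReal.tsum_comm
    _ = ∑' (v : C) (y : S) (z : S) (u : C), _ :=
      tsum_congr fun v => tsum_congr fun y => ENNReal.tsum_comm
    _ = _ := tsum_congr fun v => ENNReal.tsum_comm

def totalCost (q : S → C → S → ℝ≥0∞) (f : S → C → ℝ≥0∞) (π : Policy S C) (x : S) : ℝ≥0∞ :=
  ∑' n : ℕ, costAt q π x n f

lemma totalCost_eq (q : S → C → S → ℝ≥0∞) (f : S → C → ℝ≥0∞) (π : Policy S C) (x : S) :
    totalCost q f π x = ∑' u : C, π [] x u *
      (f x u + ∑' z : S, q x u z * totalCost q f (shiftPol π x u) z) := by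
  have htail : ∑' n : ℕ, costAt q π x (n + 1) f
      = ∑' u : C, π [] x u * ∑' z : S, q x u z * totalCost q f (shiftPol π x u) z := by
    simp only [costAt_succ, totalCost, ← ENNReal.tsum_mul_left]
    calc _ = ∑' (u : C) (n : ℕ) (z : S), _ := ENNReal.tsum_comm
      _ = _ := tsum_congr fun u => ENNReal.tsum_comm
  rw [totalCost, tsum_eq_zero_add' ENNReal.summable, costAt_zero, htail, ← ENNReal.tsum_add]
  simp only [mul_add]

lemma IsPolicy.shiftPol {U : S → Set C} {π : Policy S C} (hπ : IsPolicy U π) (x : S) (u : C) :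
    IsPolicy U (shiftPol π x u) := fun h y => hπ (h ++ [(x, u)]) y

lemma exists_isPolicy {U : S → Set C} (hU : ∀ x, (U x).Nonempty) : ∃ π, IsPolicy U π :=
  ⟨fun _ y u => if u = (hU y).some then 1 else 0, fun _ y => ⟨tsum_ite_eq _ 1, fun u hu => by
    rw [ite_ne_right_iff] at hu
    exact hu.1 ▸ (hU y).some_mem⟩⟩

/-- Plays `u` at the first step from `x`, then follows `σ z` from the state `z` reached. From
another initial state `y` it simply follows `σ y`. -/
def compPol (x : S) (u : C) (σ : S → Policy S C) : Policy S C
  | [], y => if y = x then fun u' => if u' = u then 1 else 0 else σ y [] y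
  | h, y => σ (initOf h.dropLast y) h.dropLast y

lemma isPolicy_compPol {U : S → Set C} {x : S} {u : C} {σ : S → Policy S C} (hu : u ∈ U x)
    (hσ : ∀ z, IsPolicy U (σ z)) : IsPolicy U (compPol x u σ) := by
  rintro (_ | ⟨p, h⟩) y
  · by_cases hy : y = x
    · subst hy
      simp only [compPol]
      exact ⟨tsum_ite_eq u 1, fun u' hu' => (ite_ne_right_iff.mp hu').1 ▸ hu⟩
    · simpa [compPol, hy] using hσ y [] y
  · exact hσ _ _ _

lemma shiftPol_compPol (x : S) (u : C) (σ : S → Policy S C) (h : List (S × C)) (y : S) :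
    shiftPol (compPol x u σ) x u h y = σ (initOf h y) h y := by
  cases h with
  | nil => rfl
  | cons p h =>
    show σ (initOf (p :: h ++ [(x, u)]).dropLast y) (p :: h ++ [(x, u)]).dropLast y = _
    rw [List.dropLast_concat]

lemma histProb_congr {q : S → C → S → ℝ≥0∞} {σ₁ σ₂ : Policy S C} {z : S}
    (heq : ∀ h y, initOf h y = z → σ₁ h y = σ₂ h y) (l : List (S × C)) (y : S) :
    histProb q σ₁ z l y = histProb q σ₂ z l y := by
  induction l generalizing y with
  | nil => rfl
  | cons p l ih =>
    obtain ⟨w, v⟩ := p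
    by_cases hl : initOf l w = z
    · simp only [histProb, ih, heq l w hl]
    · simp only [histProb, histProb_eq_zero_of_initOf_ne hl, zero_mul]

lemma totalCost_congr {q : S → C → S → ℝ≥0∞} {σ₁ σ₂ : Policy S C} {z : S}
    (heq : ∀ h y, initOf h y = z → σ₁ h y = σ₂ h y) (f : S → C → ℝ≥0∞) :
    totalCost q f σ₁ z = totalCost q f σ₂ z := by
  refine tsum_congr fun n => tsum_congr fun y => tsum_congr fun u => ?_
  congr 1
  refine tsum_congr fun l => ?_
  by_cases hl : initOf l.1 y = z
  · rw [histProb_congr heq, heq _ _ hl]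
  · simp only [histProb_eq_zero_of_initOf_ne hl, zero_mul]

lemma totalCost_compPol (q : S → C → S → ℝ≥0∞) (f : S → C → ℝ≥0∞) (x : S) (u : C)
    (σ : S → Policy S C) :
    totalCost q f (compPol x u σ) x = f x u + ∑' z : S, q x u z * totalCost q f (σ z) z := by
  rw [totalCost_eq, tsum_eq_single u fun u' hu' => by simp [compPol, hu']]
  simp only [compPol, if_pos, one_mul]
  congr 1
  refine tsum_congr fun z => ?_
  congr 1
  exact totalCost_congr (fun h y hy => by rw [shiftPol_compPol, hy]) f

def stepPart (c : EReal) (p : S → ℝ≥0∞) (P : S → ℝ≥0∞) : ℝ≥0∞ := ePos c + ∑' z, p z * P z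

/-- `c + ∑ z, p z * (P z - N z)` for positive parts `P` and negative parts `N`. The bracket of
`Top U q g J x` is `stepValue (g x u) (q x u) (ePos ∘ J) (ePos ∘ (-J))`. -/
def stepValue (c : EReal) (p P N : S → ℝ≥0∞) : EReal :=
  signedSum (stepPart c p P) (stepPart (-c) p N)

lemma stepValue_le_stepValue {c : EReal} {p P₁ N₁ P₂ N₂ : S → ℝ≥0∞}
    (hN₁ : stepPart (-c) p N₁ ≠ ⊤) (hN₂ : stepPart (-c) p N₂ ≠ ⊤)
    (h : ∀ z, P₁ z + N₂ z ≤ P₂ z + N₁ z) : stepValue c p P₁ N₁ ≤ stepValue c p P₂ N₂ := by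
  rw [stepValue, stepValue, signedSum_le_signedSum_iff hN₁ hN₂]
  have hsum : ∑' z, p z * P₁ z + ∑' z, p z * N₂ z ≤ ∑' z, p z * P₂ z + ∑' z, p z * N₁ z := by
    simp only [← ENNReal.tsum_add, ← mul_add]
    exact ENNReal.tsum_le_tsum fun z => mul_le_mul_right (h z) _
  calc stepPart c p P₁ + stepPart (-c) p N₂
      = (ePos c + ePos (-c)) + (∑' z, p z * P₁ z + ∑' z, p z * N₂ z) := by
        simp only [stepPart]; ring
    _ ≤ (ePos c + ePos (-c)) + (∑' z, p z * P₂ z + ∑' z, p z * N₁ z) := by gcongr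
    _ = stepPart c p P₂ + stepPart (-c) p N₁ := by simp only [stepPart]; ring

lemma stepValue_add_const {c : EReal} {p P N : S → ℝ≥0∞} (hp : ∑' z, p z = 1)
    (hN : stepPart (-c) p N ≠ ⊤) {ε : ℝ≥0∞} (hε : ε ≠ ⊤) :
    stepValue c p (fun z => P z + ε) N = stepValue c p P N + ε := by
  have : stepPart c p (fun z => P z + ε) = stepPart c p P + ε := by
    simp only [stepPart, mul_add, ENNReal.tsum_add, ENNReal.tsum_mul_right, hp, one_mul, add_assoc]
  rw [stepValue, this, signedSum_add_right hN hε, stepValue]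

section OptimalCost

variable {U : S → Set C} {q : S → C → S → ℝ≥0∞} {g : S → C → EReal}

/-- `GC U q g` says exactly `∀ x, JminusSup U q g x ≠ ⊤`. -/
def JminusSup (U : S → Set C) (q : S → C → S → ℝ≥0∞) (g : S → C → EReal) (x : S) : ℝ≥0∞ :=
  ⨆ π ∈ {π' : Policy S C | IsPolicy U π'}, Jminus q g π x

lemma Jminus_le_JminusSup {π : Policy S C} (hπ : IsPolicy U π) (x : S) :
    Jminus q g π x ≤ JminusSup U q g x :=
  le_iSup₂ (f := fun π' (_ : IsPolicy U π') => Jminus q g π' x) π hπ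

lemma Jminus_ne_top (hGC : GC U q g) {π : Policy S C} (hπ : IsPolicy U π) (x : S) :
    Jminus q g π x ≠ ⊤ :=
  ne_top_of_le_ne_top (hGC x) (Jminus_le_JminusSup hπ x)

lemma neg_JminusSup_le_Jstar (x : S) : -(JminusSup U q g x : EReal) ≤ Jstar U q g x :=
  le_iInf₂ fun _ hπ => (EReal.neg_le_neg_iff.mpr (EReal.coe_ennreal_le_coe_ennreal_iff.mpr
    (Jminus_le_JminusSup hπ x))).trans (neg_le_signedSum _ _)

lemma Jstar_ne_bot (hGC : GC U q g) (x : S) : Jstar U q g x ≠ ⊥ := fun h => by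
  have := neg_JminusSup_le_Jstar (U := U) (q := q) (g := g) x
  rw [h, le_bot_iff, EReal.neg_eq_bot_iff, EReal.coe_ennreal_eq_top_iff] at this
  exact hGC x this

lemma ePos_neg_Jstar_le_JminusSup (x : S) : ePos (-(Jstar U q g x)) ≤ JminusSup U q g x := by
  rw [← ePos_coe_ennreal (JminusSup U q g x)]
  exact ePos_mono (EReal.neg_le.mpr (neg_JminusSup_le_Jstar x))

lemma Jplus_eq (q : S → C → S → ℝ≥0∞) (g : S → C → EReal) (π : Policy S C) (x : S) :
    Jplus q g π x =
      ∑' u, π [] x u * stepPart (g x u) (q x u) (fun z => Jplus q g (shiftPol π x u) z) :=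
  totalCost_eq q (gPos g) π x

lemma Jminus_eq (q : S → C → S → ℝ≥0∞) (g : S → C → EReal) (π : Policy S C) (x : S) :
    Jminus q g π x =
      ∑' u, π [] x u * stepPart (-(g x u)) (q x u) (fun z => Jminus q g (shiftPol π x u) z) :=
  totalCost_eq q (gNeg g) π x

lemma Jminus_compPol (q : S → C → S → ℝ≥0∞) (g : S → C → EReal) (x : S) (u : C)
    (σ : S → Policy S C) :
    Jminus q g (compPol x u σ) x = stepPart (-(g x u)) (q x u) (fun z => Jminus q g (σ z) z) :=
  totalCost_compPol q (gNeg g) x u σ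

lemma Jpol_compPol (q : S → C → S → ℝ≥0∞) (g : S → C → EReal) (x : S) (u : C)
    (σ : S → Policy S C) :
    Jpol q g (compPol x u σ) x =
      stepValue (g x u) (q x u) (fun z => Jplus q g (σ z) z) (fun z => Jminus q g (σ z) z) := by
  rw [Jpol, Jminus_compPol]
  exact congrArg (signedSum · _) (totalCost_compPol q (gPos g) x u σ)

lemma tsum_mul_JminusSup_le {x : S} {u : C} (hu : u ∈ U x) :
    ∑' z, q x u z * JminusSup U q g z ≤ JminusSup U q g x := by
  have hsup : ∀ z, JminusSup U q g z = ⨆ σ : {σ // IsPolicy U σ}, Jminus q g σ.1 z :=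
    fun z => iSup_subtype'
  calc ∑' z, q x u z * JminusSup U q g z
      = ∑' z, ⨆ σ : {σ // IsPolicy U σ}, q x u z * Jminus q g σ.1 z := by
        simp only [hsup, ENNReal.mul_iSup]
    _ ≤ ⨆ s : S → {σ // IsPolicy U σ}, ∑' z, q x u z * Jminus q g (s z).1 z :=
        ENNReal.tsum_iSup_le_iSup_tsum _
    _ ≤ JminusSup U q g x := iSup_le fun s => calc
        _ ≤ stepPart (-(g x u)) (q x u) (fun z => Jminus q g (s z).1 z) := le_add_self
        _ = Jminus q g (compPol x u fun z => (s z).1) x := (Jminus_compPol q g x u _).symm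
        _ ≤ JminusSup U q g x := Jminus_le_JminusSup (isPolicy_compPol hu fun z => (s z).2) x

lemma stepPart_neg_Jstar_ne_top (hGC : GC U q g) {x : S} {u : C} (hu : u ∈ U x)
    (hgu : g x u ≠ ⊥) : stepPart (-(g x u)) (q x u) (fun z => ePos (-(Jstar U q g z))) ≠ ⊤ :=
  ENNReal.add_ne_top.mpr ⟨ePos_neg_ne_top hgu, ne_top_of_le_ne_top (hGC x)
    ((ENNReal.tsum_le_tsum fun z => mul_le_mul_right (ePos_neg_Jstar_le_JminusSup z) _).trans
      (tsum_mul_JminusSup_le hu))⟩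

lemma Top_Jstar_le_Jpol (hg : ∀ x, ∀ u ∈ U x, g x u ≠ ⊥) (hGC : GC U q g) {π : Policy S C}
    (hπ : IsPolicy U π) (x : S) : Top U q g (Jstar U q g) x ≤ Jpol q g π x := by
  rcases eq_or_ne (Jplus q g π x) ⊤ with hP | hP
  · rw [Jpol, hP, signedSum_top_left]
    exact le_top
  have hN := Jminus_ne_top hGC hπ x
  obtain ⟨u, hu0, hu⟩ := exists_ne_zero_add_le_add_of_tsum (hπ [] x).1
    (Jplus_eq q g π x).symm (Jminus_eq q g π x).symm (ENNReal.add_ne_top.mpr ⟨hP, hN⟩)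
  have huU : u ∈ U x := (hπ [] x).2 u hu0
  have hNu : stepPart (-(g x u)) (q x u) (fun z => Jminus q g (shiftPol π x u) z) ≠ ⊤ := by
    refine fun h => hN (top_le_iff.mp ?_)
    rw [Jminus_eq, ← ENNReal.mul_top hu0, ← h]
    exact ENNReal.le_tsum u
  have hJstar_le : ∀ z, ePos (Jstar U q g z) + Jminus q g (shiftPol π x u) z
      ≤ Jplus q g (shiftPol π x u) z + ePos (-(Jstar U q g z)) := fun z => by
    have hz := Jstar_ne_bot hGC z
    refine (signedSum_le_signedSum_iff (ePos_neg_ne_top hz)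
      (Jminus_ne_top hGC (hπ.shiftPol x u) z)).mp ?_
    rw [signedSum_ePos hz]
    exact iInf₂_le _ (hπ.shiftPol x u)
  calc Top U q g (Jstar U q g) x
      ≤ stepValue (g x u) (q x u) (fun z => ePos (Jstar U q g z))
          (fun z => ePos (-(Jstar U q g z))) := iInf₂_le u huU
    _ ≤ stepValue (g x u) (q x u) (fun z => Jplus q g (shiftPol π x u) z)
          (fun z => Jminus q g (shiftPol π x u) z) :=
        stepValue_le_stepValue (stepPart_neg_Jstar_ne_top hGC huU (hg x u huU)) hNu hJstar_le
    _ ≤ Jpol q g π x := (signedSum_le_signedSum_iff hNu hN).mpr hu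

lemma exists_Jpol_le_Jstar_add (hU : ∀ x, (U x).Nonempty) (hGC : GC U q g) (z : S)
    {ε : ℝ≥0∞} (hε : 0 < ε) (hε' : ε ≠ ⊤) :
    ∃ σ, IsPolicy U σ ∧ Jpol q g σ z ≤ Jstar U q g z + ε := by
  rcases eq_or_ne (Jstar U q g z) ⊤ with h | h
  · obtain ⟨σ, hσ⟩ := exists_isPolicy hU
    refine ⟨σ, hσ, ?_⟩
    rw [h, EReal.top_add_of_ne_bot (EReal.coe_ennreal_ne_bot ε)]
    exact le_top
  · obtain ⟨σ, hσ, hlt⟩ :=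
      lt_biInf_iff.mp (EReal.lt_add_ennreal h (Jstar_ne_bot hGC z) hε hε')
    exact ⟨σ, hσ, hlt.le⟩

lemma Jstar_le_Top_Jstar (hU : ∀ x, (U x).Nonempty) (hg : ∀ x, ∀ u ∈ U x, g x u ≠ ⊥)
    (hq : ∀ x, ∀ u ∈ U x, (∑' x' : S, q x u x') = 1) (hGC : GC U q g) (x : S) :
    Jstar U q g x ≤ Top U q g (Jstar U q g) x := by
  refine le_iInf₂ fun u hu => EReal.le_of_forall_le_add_ennreal fun ε hε hε' => ?_
  have hN := stepPart_neg_Jstar_ne_top hGC hu (hg x u hu)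
  choose σ hσ hσle using fun z => exists_Jpol_le_Jstar_add hU hGC z hε hε'
  have hcomp := isPolicy_compPol hu hσ
  have hNσ : stepPart (-(g x u)) (q x u) (fun z => Jminus q g (σ z) z) ≠ ⊤ :=
    Jminus_compPol q g x u σ ▸ Jminus_ne_top hGC hcomp x
  have hσ_le : ∀ z, Jplus q g (σ z) z + ePos (-(Jstar U q g z))
      ≤ (ePos (Jstar U q g z) + ε) + Jminus q g (σ z) z := fun z => by
    have hz := Jstar_ne_bot hGC z
    refine (signedSum_le_signedSum_iff (Jminus_ne_top hGC (hσ z) z) (ePos_neg_ne_top hz)).mp ?_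
    rw [signedSum_add_right (ePos_neg_ne_top hz) hε', signedSum_ePos hz]
    exact hσle z
  calc Jstar U q g x
      ≤ Jpol q g (compPol x u σ) x := iInf₂_le _ hcomp
    _ = stepValue (g x u) (q x u) (fun z => Jplus q g (σ z) z) (fun z => Jminus q g (σ z) z) :=
        Jpol_compPol q g x u σ
    _ ≤ stepValue (g x u) (q x u) (fun z => ePos (Jstar U q g z) + ε)
          (fun z => ePos (-(Jstar U q g z))) := stepValue_le_stepValue hNσ hN hσ_le
    _ = stepValue (g x u) (q x u) (fun z => ePos (Jstar U q g z))
          (fun z => ePos (-(Jstar U q g z))) + ε := stepValue_add_const (hq x u hu) hN hε'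

end OptimalCost

theorem optimality_equation_general {S C : Type}
    (U : S → Set C) (q : S → C → S → ℝ≥0∞) (g : S → C → EReal)
    (hU : ∀ x, (U x).Nonempty)
    (hg : ∀ x, ∀ u ∈ U x, g x u ≠ ⊥)
    (hq : ∀ x, ∀ u ∈ U x, (∑' x' : S, q x u x') = 1)
    (hGC : GC U q g) :
    ∀ x : S, Jstar U q g x = Top U q g (Jstar U q g) x := fun x =>
  le_antisymm (Jstar_le_Top_Jstar hU hg hq hGC x)
    (le_iInf₂ fun _ hπ => Top_Jstar_le_Jpol hg hGC hπ x)

/-- optimality equation: `J* = T(J*)`. -/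
theorem optimality_equation {S C : Type} [Countable S] [Countable C]
    (U : S → Set C) (q : S → C → S → ℝ≥0∞) (g : S → C → EReal)
    (hU : ∀ x, (U x).Nonempty)
    (hg : ∀ x, ∀ u ∈ U x, g x u ≠ ⊥)
    (hq : ∀ x, ∀ u ∈ U x, (∑' x' : S, q x u x') = 1)
    (hGC : GC U q g) :
    ∀ x : S, Jstar U q g x = Top U q g (Jstar U q g) x :=
  optimality_equation_general U q g hU hg hq hGC

end GCMDP

end
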